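/- For all functions f : (ZMod 3)^K → ZMod 3 and g, h : (ZMod 3)^L → ZMod 3, one has (1/4)·Pr_{2NLin test}[f(x) ≠ h(z)] + (3/4)·Pr_{2NLin test}[g(y) ≠ h(z)] ≤ 3/4 + (1/4)·Pr_{4NAT test}[4NAT(f(x), g(y), g(z), g(w)) = 1]. -/
import Mathlib


open Finset

/-- The 4-Not-All-There predicate: some element of `ZMod 3` does not occur
among the four inputs. -/
def fourNAT (a : Fin 4 → ZMod 3) : Prop := ∃ c : ZMod 3, ∀ i, a i ≠ c

/-- The TwoPair predicate: the four inputs take exactly two distinct values,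
each occurring exactly twice. -/
def TwoPair (a : Fin 4 → ZMod 3) : Prop :=
  ∃ b c : ZMod 3, b ≠ c ∧
    (univ.filter fun i => a i = b).card = 2 ∧
    (univ.filter fun i => a i = c).card = 2

-- Probability of an event `E x y z w` under the 4NAT test distribution with
-- parameters `d`, `K` (coordinates `j ∈ [L]`, `L = dK`, are encoded as pairs
-- `(i, j') ∈ Fin K × Fin d` with block `π(j) = i`): `x` is uniform on
-- `(ZMod 3)^K` and, independently for each coordinate `j`, `(y_j, z_j, w_j)`
-- is uniform on the 6 triples with `TwoPair (x_{π(j)}, y_j, z_j, w_j)`.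
open Classical in
noncomputable def natTestPr (d K : ℕ)
    (E : (Fin K → ZMod 3) → ((Fin K × Fin d) → ZMod 3) →
         ((Fin K × Fin d) → ZMod 3) → ((Fin K × Fin d) → ZMod 3) → Prop) : ℝ :=
  (∑ x : Fin K → ZMod 3, ∑ y : (Fin K × Fin d) → ZMod 3,
    ∑ z : (Fin K × Fin d) → ZMod 3, ∑ w : (Fin K × Fin d) → ZMod 3,
      (if (∀ j : Fin K × Fin d, TwoPair ![x j.1, y j, z j, w j]) ∧ E x y z w
       then 1 else 0))
    / (3 ^ K * 6 ^ (d * K))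

-- Probability of an event `E x y z` under the 2NLin test distribution with
-- parameters `d`, `K` (coordinates `j ∈ [L]`, `L = dK`, are encoded as pairs
-- `(i, j') ∈ Fin K × Fin d` with block `π(j) = i`): `x` is uniform on
-- `(ZMod 3)^K`, independently `y` is uniform on `(ZMod 3)^L`, and for each
-- coordinate `j`, `z_j` is drawn independently and uniformly from
-- `ZMod 3 \ {x_{π(j)}, y_j}`.
open Classical in
noncomputable def nlinPr (d K : ℕ)
    (E : (Fin K → ZMod 3) → ((Fin K × Fin d) → ZMod 3) →
         ((Fin K × Fin d) → ZMod 3) → Prop) : ℝ :=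
  (∑ x : Fin K → ZMod 3, ∑ y : (Fin K × Fin d) → ZMod 3,
    ∑ z : (Fin K × Fin d) → ZMod 3,
      (∏ j : Fin K × Fin d,
        (if z j ≠ x j.1 ∧ z j ≠ y j then
          (1 : ℝ) / (univ.filter fun c : ZMod 3 => c ≠ x j.1 ∧ c ≠ y j).card
        else 0))
      * (if E x y z then 1 else 0))
    / (3 ^ K * 3 ^ (d * K))

set_option maxHeartbeats 1600000

namespace NNAux

open Finset

instance : DecidablePred TwoPair := fun a => by unfold TwoPair; infer_instance

lemma twoPair_swap12 : ∀ x a b c : ZMod 3, TwoPair ![x,a,b,c] ↔ TwoPair ![x,b,a,c] := by decide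
lemma twoPair_swap13 : ∀ x a b c : ZMod 3, TwoPair ![x,a,b,c] ↔ TwoPair ![x,c,b,a] := by decide

lemma ite_congr' {P Q : Prop} {i1 : Decidable P} {i2 : Decidable Q} (h : P ↔ Q) {a b : ℝ} :
    @ite ℝ P i1 a b = @ite ℝ Q i2 a b := by
  have hpq := propext h
  subst hpq
  rw [Subsingleton.elim i1 i2]

lemma ite_and_one (P Q : Prop) [Decidable P] [Decidable Q] [Decidable (P ∧ Q)] :
    (if P ∧ Q then (1:ℝ) else 0) = (if P then (1:ℝ) else 0) * (if Q then (1:ℝ) else 0) := by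
  by_cases hP : P <;> by_cases hQ : Q <;> simp [hP, hQ]

lemma boole_forall {ι : Type*} [Fintype ι] (p : ι → Prop) [DecidablePred p]
    [Decidable (∀ i, p i)] :
    (if (∀ i, p i) then (1:ℝ) else 0) = ∏ i, if p i then (1:ℝ) else 0 := by
  rw [Finset.prod_boole]
  simp

lemma sum_pi_prod {ι α : Type*} [Fintype ι] [DecidableEq ι] [Fintype α] (f : ι → α → ℝ) :
    ∑ g : ι → α, ∏ i, f i (g i) = ∏ i, ∑ a, f i a := (Fintype.prod_sum f).symm

noncomputable def om (x y s : ZMod 3) : ℝ :=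
  if s ≠ x ∧ s ≠ y then (1:ℝ)/((univ.filter fun c : ZMod 3 => c ≠ x ∧ c ≠ y).card) else 0

lemma percoord_nat : ∀ x y s : ZMod 3,
    ((univ.filter fun a : ZMod 3 => TwoPair ![x, y, a, s - x - y - a]).card)
      * (univ.filter fun c : ZMod 3 => c ≠ x ∧ c ≠ y).card
    = if s ≠ x ∧ s ≠ y then 2 else 0 := by decide

lemma card_pos' : ∀ x y : ZMod 3, 0 < (univ.filter fun c : ZMod 3 => c ≠ x ∧ c ≠ y).card := by
  decide

lemma percoord (x y s : ZMod 3) :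
    (∑ a : ZMod 3, if TwoPair ![x, y, a, s - x - y - a] then (1:ℝ) else 0) = 2 * om x y s := by
  have hsum : (∑ a : ZMod 3, if TwoPair ![x, y, a, s - x - y - a] then (1:ℝ) else 0)
      = ((univ.filter fun a : ZMod 3 => TwoPair ![x, y, a, s - x - y - a]).card : ℝ) := by
    rw [Finset.sum_boole]
  have hm : (0:ℝ) < ((univ.filter fun c : ZMod 3 => c ≠ x ∧ c ≠ y).card : ℝ) := by
    exact_mod_cast card_pos' x y
  have key : (((univ.filter fun a : ZMod 3 => TwoPair ![x, y, a, s - x - y - a]).card : ℝ))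
      * ((univ.filter fun c : ZMod 3 => c ≠ x ∧ c ≠ y).card : ℝ)
      = if s ≠ x ∧ s ≠ y then 2 else 0 := by
    have := percoord_nat x y s
    by_cases hP : s ≠ x ∧ s ≠ y
    · rw [if_pos hP] at this ⊢; exact_mod_cast this
    · rw [if_neg hP] at this ⊢; exact_mod_cast this
  rw [hsum, om]
  by_cases hP : s ≠ x ∧ s ≠ y
  · rw [if_pos hP] at key ⊢
    field_simp
    linarith [key]
  · rw [if_neg hP] at key ⊢
    have := hm.ne'
    rw [mul_comm] at key
    simpa using (mul_eq_zero.mp key).resolve_left this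

lemma six_nat : ∀ x : ZMod 3, (∑ a : ZMod 3, ∑ b : ZMod 3, ∑ c : ZMod 3,
    (if TwoPair ![x,a,b,c] then (1:ℕ) else 0)) = 6 := by decide

lemma six (x : ZMod 3) : (∑ a : ZMod 3, ∑ b : ZMod 3, ∑ c : ZMod 3,
    (if TwoPair ![x,a,b,c] then (1:ℝ) else 0)) = 6 := by
  have h := six_nat x
  have h2 : ((∑ a : ZMod 3, ∑ b : ZMod 3, ∑ c : ZMod 3,
      (if TwoPair ![x,a,b,c] then (1:ℕ) else 0) : ℕ) : ℝ) = 6 := by rw [h]; norm_num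
  rw [← h2]
  push_cast
  rfl

open Classical in
noncomputable def Nnat (d K : ℕ)
    (E : (Fin K → ZMod 3) → ((Fin K × Fin d) → ZMod 3) →
         ((Fin K × Fin d) → ZMod 3) → ((Fin K × Fin d) → ZMod 3) → Prop) : ℝ :=
  ∑ x : Fin K → ZMod 3, ∑ y : (Fin K × Fin d) → ZMod 3,
    ∑ z : (Fin K × Fin d) → ZMod 3, ∑ w : (Fin K × Fin d) → ZMod 3,
      (if (∀ j : Fin K × Fin d, TwoPair ![x j.1, y j, z j, w j]) ∧ E x y z w
       then (1:ℝ) else 0)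

lemma natTestPr_eq (d K : ℕ)
    (E : (Fin K → ZMod 3) → ((Fin K × Fin d) → ZMod 3) →
         ((Fin K × Fin d) → ZMod 3) → ((Fin K × Fin d) → ZMod 3) → Prop) :
    natTestPr d K E = Nnat d K E / (3 ^ K * 6 ^ (d * K)) := by
  unfold natTestPr Nnat
  refine congrArg (fun t : ℝ => t / (3 ^ K * 6 ^ (d * K))) ?_
  refine Finset.sum_congr rfl fun x _ => Finset.sum_congr rfl fun y _ =>
    Finset.sum_congr rfl fun z _ => Finset.sum_congr rfl fun w _ => ?_
  exact ite_congr' Iff.rfl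

open Classical in
lemma nlinPr_eq (d K : ℕ)
    (E : (Fin K → ZMod 3) → ((Fin K × Fin d) → ZMod 3) →
         ((Fin K × Fin d) → ZMod 3) → Prop) :
    nlinPr d K E
      = (∑ x : Fin K → ZMod 3, ∑ y : (Fin K × Fin d) → ZMod 3,
          ∑ z : (Fin K × Fin d) → ZMod 3,
            (∏ j : Fin K × Fin d, om (x j.1) (y j) (z j))
              * (if E x y z then (1:ℝ) else 0)) / (3 ^ K * 3 ^ (d * K)) := by
  unfold nlinPr
  refine congrArg (fun t : ℝ => t / (3 ^ K * 3 ^ (d * K))) ?_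
  refine Finset.sum_congr rfl fun x _ => Finset.sum_congr rfl fun y _ =>
    Finset.sum_congr rfl fun z _ => ?_
  exact congrArg₂ (· * ·)
    (Finset.prod_congr rfl fun j _ => rfl)
    (ite_congr' Iff.rfl)
open Classical in
lemma change (d K : ℕ)
    (E : (Fin K → ZMod 3) → ((Fin K × Fin d) → ZMod 3) →
         ((Fin K × Fin d) → ZMod 3) → Prop) :
    natTestPr d K (fun x y z w => E x y (fun j => x j.1 + y j + z j + w j))
      = nlinPr d K E := by
  have key : ∀ (x : Fin K → ZMod 3) (y : (Fin K × Fin d) → ZMod 3),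
      (∑ z : (Fin K × Fin d) → ZMod 3, ∑ w : (Fin K × Fin d) → ZMod 3,
        (if (∀ j : Fin K × Fin d, TwoPair ![x j.1, y j, z j, w j]) ∧
            E x y (fun j => x j.1 + y j + z j + w j) then (1:ℝ) else 0))
      = 2 ^ (d * K) * ∑ z : (Fin K × Fin d) → ZMod 3,
          (∏ j : Fin K × Fin d, om (x j.1) (y j) (z j))
            * (if E x y z then (1:ℝ) else 0) := by
    intro x y
    have step1 : ∀ (z w : (Fin K × Fin d) → ZMod 3),
        (if (∀ j : Fin K × Fin d, TwoPair ![x j.1, y j, z j, w j]) ∧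
            E x y (fun j => x j.1 + y j + z j + w j) then (1:ℝ) else 0)
        = (∏ j : Fin K × Fin d, if TwoPair ![x j.1, y j, z j, w j] then (1:ℝ) else 0)
            * (if E x y (fun j => x j.1 + y j + z j + w j) then (1:ℝ) else 0) := by
      intro z w
      rw [ite_and_one, boole_forall]
    have step2 : ∀ z : (Fin K × Fin d) → ZMod 3,
        (∑ w : (Fin K × Fin d) → ZMod 3,
          (∏ j : Fin K × Fin d, if TwoPair ![x j.1, y j, z j, w j] then (1:ℝ) else 0)
            * (if E x y (fun j => x j.1 + y j + z j + w j) then (1:ℝ) else 0))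
        = ∑ v : (Fin K × Fin d) → ZMod 3,
          (∏ j : Fin K × Fin d,
            if TwoPair ![x j.1, y j, z j, v j - x j.1 - y j - z j] then (1:ℝ) else 0)
            * (if E x y v then (1:ℝ) else 0) := by
      intro z
      set c : (Fin K × Fin d) → ZMod 3 := fun j => x j.1 + y j + z j with hc
      set G : ((Fin K × Fin d) → ZMod 3) → ℝ := fun v =>
        (∏ j : Fin K × Fin d,
          if TwoPair ![x j.1, y j, z j, v j - x j.1 - y j - z j] then (1:ℝ) else 0)
          * (if E x y v then (1:ℝ) else 0) with hG
      have := Equiv.sum_comp (Equiv.addLeft c) G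
      rw [← this]
      refine Finset.sum_congr rfl fun w _ => ?_
      have hcv : (Equiv.addLeft c) w = fun j => x j.1 + y j + z j + w j := by
        funext j
        simp [hc, Pi.add_apply]
      rw [hG, hcv]
      congr 1
      refine Finset.prod_congr rfl fun j _ => ?_
      congr 2
      ring
    calc (∑ z : (Fin K × Fin d) → ZMod 3, ∑ w : (Fin K × Fin d) → ZMod 3,
        (if (∀ j : Fin K × Fin d, TwoPair ![x j.1, y j, z j, w j]) ∧
            E x y (fun j => x j.1 + y j + z j + w j) then (1:ℝ) else 0))
        = ∑ z : (Fin K × Fin d) → ZMod 3, ∑ v : (Fin K × Fin d) → ZMod 3,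
          (∏ j : Fin K × Fin d,
            if TwoPair ![x j.1, y j, z j, v j - x j.1 - y j - z j] then (1:ℝ) else 0)
            * (if E x y v then (1:ℝ) else 0) := by
          refine Finset.sum_congr rfl fun z _ => ?_
          rw [← step2 z]
          exact Finset.sum_congr rfl fun w _ => step1 z w
      _ = ∑ v : (Fin K × Fin d) → ZMod 3, ∑ z : (Fin K × Fin d) → ZMod 3,
          (∏ j : Fin K × Fin d,
            if TwoPair ![x j.1, y j, z j, v j - x j.1 - y j - z j] then (1:ℝ) else 0)
            * (if E x y v then (1:ℝ) else 0) := Finset.sum_comm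
      _ = ∑ v : (Fin K × Fin d) → ZMod 3,
          (∏ j : Fin K × Fin d, 2 * om (x j.1) (y j) (v j))
            * (if E x y v then (1:ℝ) else 0) := by
          refine Finset.sum_congr rfl fun v _ => ?_
          rw [← Finset.sum_mul]
          congr 1
          rw [sum_pi_prod (fun j a =>
            if TwoPair ![x j.1, y j, a, v j - x j.1 - y j - a] then (1:ℝ) else 0)]
          exact Finset.prod_congr rfl fun j _ => percoord _ _ _
      _ = 2 ^ (d * K) * ∑ z : (Fin K × Fin d) → ZMod 3,
          (∏ j : Fin K × Fin d, om (x j.1) (y j) (z j))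
            * (if E x y z then (1:ℝ) else 0) := by
          rw [Finset.mul_sum]
          refine Finset.sum_congr rfl fun v _ => ?_
          rw [Finset.prod_mul_distrib, Finset.prod_const]
          simp only [card_univ, Fintype.card_prod, Fintype.card_fin]
          rw [mul_comm d K]
          ring
  rw [natTestPr_eq, nlinPr_eq]
  have hnum : Nnat d K (fun x y z w => E x y (fun j => x j.1 + y j + z j + w j))
      = 2 ^ (d * K) * ∑ x : Fin K → ZMod 3, ∑ y : (Fin K × Fin d) → ZMod 3,
          ∑ z : (Fin K × Fin d) → ZMod 3,
          (∏ j : Fin K × Fin d, om (x j.1) (y j) (z j))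
            * (if E x y z then (1:ℝ) else 0) := by
    unfold Nnat
    rw [Finset.mul_sum]
    refine Finset.sum_congr rfl fun x _ => ?_
    rw [Finset.mul_sum]
    exact Finset.sum_congr rfl fun y _ => key x y
  rw [hnum]
  have h6 : ((6:ℝ)) ^ (d * K) = 2 ^ (d * K) * 3 ^ (d * K) := by
    rw [← mul_pow]; norm_num
  rw [h6]
  have h2 : ((2:ℝ)) ^ (d * K) ≠ 0 := by positivity
  rw [show (3:ℝ) ^ K * (2 ^ (d * K) * 3 ^ (d * K)) = 2 ^ (d*K) * (3 ^ K * 3 ^ (d*K)) by ring,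
    mul_div_mul_left _ _ h2]
lemma Nnat_swap12 (d K : ℕ)
    (E : (Fin K → ZMod 3) → ((Fin K × Fin d) → ZMod 3) →
         ((Fin K × Fin d) → ZMod 3) → ((Fin K × Fin d) → ZMod 3) → Prop) :
    Nnat d K (fun x y z w => E x z y w) = Nnat d K E := by
  unfold Nnat
  refine Finset.sum_congr rfl fun x _ => ?_
  rw [Finset.sum_comm]
  refine Finset.sum_congr rfl fun y _ => Finset.sum_congr rfl fun z _ =>
    Finset.sum_congr rfl fun w _ => ?_
  exact ite_congr' (and_congr (forall_congr' fun j =>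
    twoPair_swap12 (x j.1) (z j) (y j) (w j)) Iff.rfl)

lemma Nnat_swap13 (d K : ℕ)
    (E : (Fin K → ZMod 3) → ((Fin K × Fin d) → ZMod 3) →
         ((Fin K × Fin d) → ZMod 3) → ((Fin K × Fin d) → ZMod 3) → Prop) :
    Nnat d K (fun x y z w => E x w z y) = Nnat d K E := by
  unfold Nnat
  refine Finset.sum_congr rfl fun x _ => ?_
  have reorder : ∀ (F : ((Fin K × Fin d) → ZMod 3) → ((Fin K × Fin d) → ZMod 3) →
      ((Fin K × Fin d) → ZMod 3) → ℝ),
      (∑ a : (Fin K × Fin d) → ZMod 3, ∑ b : (Fin K × Fin d) → ZMod 3,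
        ∑ c : (Fin K × Fin d) → ZMod 3, F a b c)
      = ∑ c : (Fin K × Fin d) → ZMod 3, ∑ b : (Fin K × Fin d) → ZMod 3,
        ∑ a : (Fin K × Fin d) → ZMod 3, F a b c := by
    intro F
    calc (∑ a : (Fin K × Fin d) → ZMod 3, ∑ b : (Fin K × Fin d) → ZMod 3,
          ∑ c : (Fin K × Fin d) → ZMod 3, F a b c)
        = ∑ a : (Fin K × Fin d) → ZMod 3, ∑ c : (Fin K × Fin d) → ZMod 3,
          ∑ b : (Fin K × Fin d) → ZMod 3, F a b c :=
          Finset.sum_congr rfl fun a _ => Finset.sum_comm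
      _ = ∑ c : (Fin K × Fin d) → ZMod 3, ∑ a : (Fin K × Fin d) → ZMod 3,
          ∑ b : (Fin K × Fin d) → ZMod 3, F a b c := Finset.sum_comm
      _ = ∑ c : (Fin K × Fin d) → ZMod 3, ∑ b : (Fin K × Fin d) → ZMod 3,
          ∑ a : (Fin K × Fin d) → ZMod 3, F a b c :=
          Finset.sum_congr rfl fun c _ => Finset.sum_comm
  rw [reorder]
  refine Finset.sum_congr rfl fun y _ => Finset.sum_congr rfl fun z _ =>
    Finset.sum_congr rfl fun w _ => ?_
  exact ite_congr' (and_congr (forall_congr' fun j =>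
    twoPair_swap13 (x j.1) (w j) (z j) (y j)) Iff.rfl)

lemma total (d K : ℕ) :
    (∑ x : Fin K → ZMod 3, ∑ y : (Fin K × Fin d) → ZMod 3,
      ∑ z : (Fin K × Fin d) → ZMod 3, ∑ w : (Fin K × Fin d) → ZMod 3,
        (if (∀ j : Fin K × Fin d, TwoPair ![x j.1, y j, z j, w j]) then (1:ℝ) else 0))
    = 3 ^ K * 6 ^ (d * K) := by
  have h1 : ∀ (x : Fin K → ZMod 3) (y z : (Fin K × Fin d) → ZMod 3),
      (∑ w : (Fin K × Fin d) → ZMod 3, ∏ j : Fin K × Fin d,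
        if TwoPair ![x j.1, y j, z j, w j] then (1:ℝ) else 0)
      = ∏ j : Fin K × Fin d, ∑ cc : ZMod 3,
          if TwoPair ![x j.1, y j, z j, cc] then (1:ℝ) else 0 := by
    intro x y z
    rw [sum_pi_prod (fun (j : Fin K × Fin d) (cc : ZMod 3) => if TwoPair ![x j.1, y j, z j, cc] then (1:ℝ) else 0)]
  have h2 : ∀ (x : Fin K → ZMod 3) (y : (Fin K × Fin d) → ZMod 3),
      (∑ z : (Fin K × Fin d) → ZMod 3, ∏ j : Fin K × Fin d, ∑ cc : ZMod 3,
        if TwoPair ![x j.1, y j, z j, cc] then (1:ℝ) else 0)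
      = ∏ j : Fin K × Fin d, ∑ bb : ZMod 3, ∑ cc : ZMod 3,
          if TwoPair ![x j.1, y j, bb, cc] then (1:ℝ) else 0 := by
    intro x y
    rw [sum_pi_prod (fun (j : Fin K × Fin d) (bb : ZMod 3) => ∑ cc : ZMod 3,
      if TwoPair ![x j.1, y j, bb, cc] then (1:ℝ) else 0)]
  have h3 : ∀ (x : Fin K → ZMod 3),
      (∑ y : (Fin K × Fin d) → ZMod 3, ∏ j : Fin K × Fin d, ∑ bb : ZMod 3, ∑ cc : ZMod 3,
        if TwoPair ![x j.1, y j, bb, cc] then (1:ℝ) else 0)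
      = ∏ j : Fin K × Fin d, ∑ aa : ZMod 3, ∑ bb : ZMod 3, ∑ cc : ZMod 3,
          if TwoPair ![x j.1, aa, bb, cc] then (1:ℝ) else 0 := by
    intro x
    rw [sum_pi_prod (fun (j : Fin K × Fin d) (aa : ZMod 3) => ∑ bb : ZMod 3, ∑ cc : ZMod 3,
      if TwoPair ![x j.1, aa, bb, cc] then (1:ℝ) else 0)]
  have hx : ∀ x : Fin K → ZMod 3,
      (∑ y : (Fin K × Fin d) → ZMod 3, ∑ z : (Fin K × Fin d) → ZMod 3,
        ∑ w : (Fin K × Fin d) → ZMod 3,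
          (if (∀ j : Fin K × Fin d, TwoPair ![x j.1, y j, z j, w j]) then (1:ℝ) else 0))
      = 6 ^ (d * K) := by
    intro x
    calc (∑ y : (Fin K × Fin d) → ZMod 3, ∑ z : (Fin K × Fin d) → ZMod 3,
          ∑ w : (Fin K × Fin d) → ZMod 3,
            (if (∀ j : Fin K × Fin d, TwoPair ![x j.1, y j, z j, w j]) then (1:ℝ) else 0))
        = ∑ y : (Fin K × Fin d) → ZMod 3, ∑ z : (Fin K × Fin d) → ZMod 3,
          ∑ w : (Fin K × Fin d) → ZMod 3,
            ∏ j : Fin K × Fin d, if TwoPair ![x j.1, y j, z j, w j] then (1:ℝ) else 0 :=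
          Finset.sum_congr rfl fun y _ => Finset.sum_congr rfl fun z _ =>
            Finset.sum_congr rfl fun w _ => boole_forall _
      _ = ∑ y : (Fin K × Fin d) → ZMod 3, ∑ z : (Fin K × Fin d) → ZMod 3,
          ∏ j : Fin K × Fin d, ∑ cc : ZMod 3,
            if TwoPair ![x j.1, y j, z j, cc] then (1:ℝ) else 0 :=
          Finset.sum_congr rfl fun y _ => Finset.sum_congr rfl fun z _ => h1 x y z
      _ = ∑ y : (Fin K × Fin d) → ZMod 3,
          ∏ j : Fin K × Fin d, ∑ bb : ZMod 3, ∑ cc : ZMod 3,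
            if TwoPair ![x j.1, y j, bb, cc] then (1:ℝ) else 0 :=
          Finset.sum_congr rfl fun y _ => h2 x y
      _ = ∏ j : Fin K × Fin d, ∑ aa : ZMod 3, ∑ bb : ZMod 3, ∑ cc : ZMod 3,
            if TwoPair ![x j.1, aa, bb, cc] then (1:ℝ) else 0 := h3 x
      _ = ∏ _j : Fin K × Fin d, (6:ℝ) := Finset.prod_congr rfl fun j _ => six (x j.1)
      _ = 6 ^ (d * K) := by
          rw [Finset.prod_const]
          simp only [card_univ, Fintype.card_prod, Fintype.card_fin]
          rw [mul_comm d K]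
  calc (∑ x : Fin K → ZMod 3, ∑ y : (Fin K × Fin d) → ZMod 3,
        ∑ z : (Fin K × Fin d) → ZMod 3, ∑ w : (Fin K × Fin d) → ZMod 3,
          (if (∀ j : Fin K × Fin d, TwoPair ![x j.1, y j, z j, w j]) then (1:ℝ) else 0))
      = ∑ _x : Fin K → ZMod 3, (6:ℝ) ^ (d * K) :=
        Finset.sum_congr rfl fun x _ => hx x
    _ = 3 ^ K * 6 ^ (d * K) := by
        rw [Finset.sum_const]
        simp only [card_univ]
        rw [Fintype.card_fun]
        simp [ZMod.card, nsmul_eq_mul]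

lemma pt {T A1 A2 A3 A4 B : Prop} {j1 : Decidable (T ∧ A1)} {j2 : Decidable (T ∧ A2)}
    {j3 : Decidable (T ∧ A3)} {j4 : Decidable (T ∧ A4)} {jT : Decidable T}
    {jB : Decidable (T ∧ B)}
    (hB : ¬B → ¬(A1 ∧ A2 ∧ A3 ∧ A4)) :
    @ite ℝ (T ∧ A1) j1 1 0 + @ite ℝ (T ∧ A2) j2 1 0
      + @ite ℝ (T ∧ A3) j3 1 0 + @ite ℝ (T ∧ A4) j4 1 0
    ≤ 3 * @ite ℝ T jT 1 0 + @ite ℝ (T ∧ B) jB 1 0 := by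
  have hb1 : ∀ {P : Prop} {i : Decidable P}, (0:ℝ) ≤ @ite ℝ P i 1 0 := by
    intros P i; split <;> norm_num
  have hb2 : ∀ {P : Prop} {i : Decidable P}, @ite ℝ P i 1 0 ≤ 1 := by
    intros P i; split <;> norm_num
  by_cases hT : T
  · by_cases hb : B
    · rw [if_pos hT, if_pos (show T ∧ B from ⟨hT, hb⟩)]
      linarith [hb2 (P := T ∧ A1) (i := j1), hb2 (P := T ∧ A2) (i := j2),
        hb2 (P := T ∧ A3) (i := j3), hb2 (P := T ∧ A4) (i := j4)]
    · have hA := hB hb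
      have hz : @ite ℝ (T ∧ A1) j1 1 0 = 0 ∨ @ite ℝ (T ∧ A2) j2 1 0 = 0
          ∨ @ite ℝ (T ∧ A3) j3 1 0 = 0 ∨ @ite ℝ (T ∧ A4) j4 1 0 = 0 := by
        by_cases h1 : A1
        · by_cases h2 : A2
          · by_cases h3 : A3
            · exact Or.inr (Or.inr (Or.inr (if_neg fun hc => hA ⟨h1, h2, h3, hc.2⟩)))
            · exact Or.inr (Or.inr (Or.inl (if_neg fun hc => h3 hc.2)))
          · exact Or.inr (Or.inl (if_neg fun hc => h2 hc.2))
        · exact Or.inl (if_neg fun hc => h1 hc.2)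
      rw [if_pos hT, if_neg (show ¬(T ∧ B) from fun hc => hb hc.2)]
      rcases hz with h | h | h | h <;> rw [h] <;>
        linarith [hb2 (P := T ∧ A1) (i := j1), hb2 (P := T ∧ A2) (i := j2),
          hb2 (P := T ∧ A3) (i := j3), hb2 (P := T ∧ A4) (i := j4),
          hb1 (P := T ∧ A1) (i := j1), hb1 (P := T ∧ A2) (i := j2),
          hb1 (P := T ∧ A3) (i := j3), hb1 (P := T ∧ A4) (i := j4)]
  · rw [if_neg (show ¬(T ∧ A1) from fun hc => hT hc.1),
      if_neg (show ¬(T ∧ A2) from fun hc => hT hc.1),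
      if_neg (show ¬(T ∧ A3) from fun hc => hT hc.1),
      if_neg (show ¬(T ∧ A4) from fun hc => hT hc.1),
      if_neg hT, if_neg (show ¬(T ∧ B) from fun hc => hT hc.1)]
    norm_num
lemma main_num (d K : ℕ) (f : (Fin K → ZMod 3) → ZMod 3)
    (g h : ((Fin K × Fin d) → ZMod 3) → ZMod 3) :
    Nnat d K (fun x y z w => f x ≠ h (fun j => x j.1 + y j + z j + w j))
    + Nnat d K (fun x y z w => g y ≠ h (fun j => x j.1 + y j + z j + w j))
    + Nnat d K (fun x y z w => g z ≠ h (fun j => x j.1 + y j + z j + w j))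
    + Nnat d K (fun x y z w => g w ≠ h (fun j => x j.1 + y j + z j + w j))
    ≤ 3 * (3 ^ K * 6 ^ (d * K))
      + Nnat d K (fun x y z w => fourNAT ![f x, g y, g z, g w]) := by
  classical
  unfold Nnat
  rw [← total d K]
  simp only [Finset.mul_sum, ← Finset.sum_add_distrib]
  refine Finset.sum_le_sum fun x _ => Finset.sum_le_sum fun y _ =>
    Finset.sum_le_sum fun z _ => Finset.sum_le_sum fun w _ => ?_
  refine pt ?_
  intro hb hA
  obtain ⟨a1, a2, a3, a4⟩ := hA
  unfold fourNAT at hb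
  push_neg at hb
  obtain ⟨i, hi⟩ := hb (h (fun j => x j.1 + y j + z j + w j))
  fin_cases i <;> simp_all

end NNAux

theorem nlin_le_nat (d K : ℕ) (hd : 0 < d) (hK : 0 < K)
    (f : (Fin K → ZMod 3) → ZMod 3)
    (g h : ((Fin K × Fin d) → ZMod 3) → ZMod 3) :
    (1 / 4) * nlinPr d K (fun x _y z => f x ≠ h z)
      + (3 / 4) * nlinPr d K (fun _x y z => g y ≠ h z)
    ≤ 3 / 4 + (1 / 4) *
        natTestPr d K (fun x y z w => fourNAT ![f x, g y, g z, g w]) := by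
  classical
  have c1 : nlinPr d K (fun x _y z => f x ≠ h z)
      = natTestPr d K (fun x y z w => f x ≠ h (fun j => x j.1 + y j + z j + w j)) :=
    (NNAux.change d K _).symm
  have c2 : nlinPr d K (fun _x y z => g y ≠ h z)
      = natTestPr d K (fun x y z w => g y ≠ h (fun j => x j.1 + y j + z j + w j)) :=
    (NNAux.change d K _).symm
  rw [c1, c2, NNAux.natTestPr_eq, NNAux.natTestPr_eq, NNAux.natTestPr_eq]
  have hDpos : (0:ℝ) < 3 ^ K * 6 ^ (d * K) := by positivity
  have e2 : NNAux.Nnat d K (fun x y z w => g y ≠ h (fun j => x j.1 + y j + z j + w j))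
      = NNAux.Nnat d K (fun x y z w => g z ≠ h (fun j => x j.1 + y j + z j + w j)) := by
    rw [← NNAux.Nnat_swap12 d K
      (fun x y z w => g z ≠ h (fun j => x j.1 + y j + z j + w j))]
    congr 1
    funext x y z w
    beta_reduce
    rw [show (fun j : Fin K × Fin d => x j.1 + z j + y j + w j)
      = (fun j => x j.1 + y j + z j + w j) from funext fun j => by ring]
  have e3 : NNAux.Nnat d K (fun x y z w => g y ≠ h (fun j => x j.1 + y j + z j + w j))
      = NNAux.Nnat d K (fun x y z w => g w ≠ h (fun j => x j.1 + y j + z j + w j)) := by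
    rw [← NNAux.Nnat_swap13 d K
      (fun x y z w => g w ≠ h (fun j => x j.1 + y j + z j + w j))]
    congr 1
    funext x y z w
    beta_reduce
    rw [show (fun j : Fin K × Fin d => x j.1 + w j + z j + y j)
      = (fun j => x j.1 + y j + z j + w j) from funext fun j => by ring]
  have hmain := NNAux.main_num d K f g h
  rw [← e2, ← e3] at hmain
  have h4 : (NNAux.Nnat d K (fun x y z w => f x ≠ h (fun j => x j.1 + y j + z j + w j))
      + NNAux.Nnat d K (fun x y z w => g y ≠ h (fun j => x j.1 + y j + z j + w j))
      + NNAux.Nnat d K (fun x y z w => g y ≠ h (fun j => x j.1 + y j + z j + w j))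
      + NNAux.Nnat d K (fun x y z w => g y ≠ h (fun j => x j.1 + y j + z j + w j)))
        / (3 ^ K * 6 ^ (d * K))
      ≤ 3 + NNAux.Nnat d K (fun x y z w => fourNAT ![f x, g y, g z, g w])
        / (3 ^ K * 6 ^ (d * K)) := by
    rw [div_le_iff₀ hDpos]
    have hexp : (3 + NNAux.Nnat d K (fun x y z w => fourNAT ![f x, g y, g z, g w])
        / (3 ^ K * 6 ^ (d * K))) * (3 ^ K * 6 ^ (d * K))
        = 3 * (3 ^ K * 6 ^ (d * K))
          + NNAux.Nnat d K (fun x y z w => fourNAT ![f x, g y, g z, g w]) := by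
      field_simp
      try ring
    rw [hexp]
    exact hmain
  rw [add_div, add_div, add_div] at h4
  linarith
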